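/- arXiv:1608.08484 — 2 statements merged into one kernel-verified Lean document; each statement's English description precedes it below -/
import Mathlib

section
/- The payment vector p̄ defined by p̄_j = c_j(1 - x̂_j) for j < s, p̄_j = 0 for j > s, and p̄_s = (c_s/π_s)(x* - Σ_{j<s} π_j - Σ_{j≥s} π_j x̂_j) is feasible for problem (P2): p̄_i ≥ 0 and x̂_i + p̄_i/c_i ≤ 1 for all i, and Σ_i π_i·(x̂_i + p̄_i/c_i) = x* (in particular ≥ x*). -/
/-!
Let `A = x* - ∑_{i<s} π i - ∑_{i≥s} π i x̂ i` be what the critical agent `s` still has to cover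
once every agent before it is pushed to opinion `1`, so that `p̄` raises the opinion of agent `s`
by `A / π s`. Minimality of `s` gives `A > 0`: either `s` is the first agent and
`A = x* - ∑ π i x̂ i`, or the predecessor of `s` misses the target with exactly the sum subtracted
in `A`. Membership of `s` in the set gives `A ≤ π s (1 - x̂ s)`. The new weighted opinion is
`∑_{i<s} π i + ∑_{i≥s} π i x̂ i + A = x*`.
-/

open Finset

section

variable {ι : Type*} [LinearOrder ι] [LocallyFiniteOrderBot ι] [LocallyFiniteOrderTop ι]

theorem Finset.sum_Iio_add_sum_Ici [Fintype ι] (f : ι → ℝ) (s : ι) :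
    ∑ i ∈ Iio s, f i + ∑ i ∈ Ici s, f i = ∑ i, f i := by
  rw [← sum_union (disjoint_left.2 fun _ hi hi' => (mem_Iio.1 hi).not_ge (mem_Ici.1 hi'))]
  exact sum_congr (eq_univ_of_forall fun i => by simp [lt_or_ge]) fun _ _ => rfl

def saturatedOpinion (π x : ι → ℝ) (j : ι) : ℝ :=
  ∑ i ∈ Iic j, π i + ∑ i ∈ Ioi j, π i * x i

def criticalShortfall (π x : ι → ℝ) (a : ℝ) (s : ι) : ℝ :=
  a - ∑ i ∈ Iio s, π i - ∑ i ∈ Ici s, π i * x i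

noncomputable def criticalOpinionShift (π x : ι → ℝ) (a : ℝ) (s i : ι) : ℝ :=
  if i < s then 1 - x i else if i = s then criticalShortfall π x a s / π s else 0

variable {π x : ι → ℝ} {a : ℝ} {s : ι}

theorem criticalShortfall_le (hs : a ≤ saturatedOpinion π x s) :
    criticalShortfall π x a s ≤ π s * (1 - x s) := by
  rw [saturatedOpinion, ← add_sum_Iio_eq_sum_Iic] at hs
  rw [criticalShortfall, ← add_sum_Ioi_eq_sum_Ici]
  linarith

theorem criticalShortfall_pos [Fintype ι] [PredOrder ι]
    (hs : IsLeast {j | a ≤ saturatedOpinion π x j} s) (ha : ∑ i, π i * x i < a) :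
    0 < criticalShortfall π x a s := by
  rw [criticalShortfall, sub_sub, sub_pos]
  by_cases hmin : IsMin s
  · have hIio : Iio s = ∅ := Iio_eq_empty.2 hmin
    rw [← sum_Iio_add_sum_Ici _ s, hIio] at ha
    simpa [hIio] using ha
  · have hpred : ¬ a ≤ saturatedOpinion π x (Order.pred s) := fun h =>
      (Order.pred_lt_of_not_isMin hmin).not_ge (hs.2 h)
    have hIic : Iic (Order.pred s) = Iio s := by
      ext i; simp [Order.le_pred_iff_of_not_isMin hmin]
    have hIoi : Ioi (Order.pred s) = Ici s := by
      ext i; simp [Order.pred_lt_iff_of_not_isMin hmin]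
    rwa [saturatedOpinion, hIic, hIoi, not_le] at hpred

theorem criticalOpinionShift_nonneg (hπ : 0 < π s) (hx : ∀ i, x i ≤ 1)
    (hA : 0 < criticalShortfall π x a s) (i : ι) : 0 ≤ criticalOpinionShift π x a s i := by
  unfold criticalOpinionShift
  split_ifs
  · exact sub_nonneg.2 (hx i)
  · exact (div_pos hA hπ).le
  · exact le_rfl

theorem criticalOpinionShift_le (hπ : 0 < π s) (hx : ∀ i, x i ≤ 1)
    (hs : a ≤ saturatedOpinion π x s) (i : ι) : criticalOpinionShift π x a s i ≤ 1 - x i := by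
  unfold criticalOpinionShift
  split_ifs with _ his
  · exact le_rfl
  · subst his
    exact (div_le_iff₀' hπ).2 (criticalShortfall_le hs)
  · exact sub_nonneg.2 (hx i)

theorem sum_mul_criticalOpinionShift (hπ : π s ≠ 0) :
    ∑ i ∈ Ici s, π i * criticalOpinionShift π x a s i = criticalShortfall π x a s := by
  have hafter : ∀ i ∈ Ioi s, π i * criticalOpinionShift π x a s i = 0 := fun i hi => by
    rw [criticalOpinionShift, if_neg (mem_Ioi.1 hi).not_gt, if_neg (mem_Ioi.1 hi).ne', mul_zero]
  rw [← add_sum_Ioi_eq_sum_Ici, sum_congr rfl hafter, sum_const_zero, add_zero,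
    criticalOpinionShift, if_neg (lt_irrefl s), if_pos rfl, mul_div_cancel₀ _ hπ]

theorem sum_mul_add_criticalOpinionShift [Fintype ι] (hπ : π s ≠ 0) :
    ∑ i, π i * (x i + criticalOpinionShift π x a s i) = a := by
  have hbefore : ∀ i ∈ Iio s, π i * (x i + criticalOpinionShift π x a s i) = π i := fun i hi => by
    rw [criticalOpinionShift, if_pos (mem_Iio.1 hi)]
    ring
  rw [← sum_Iio_add_sum_Ici _ s, sum_congr rfl hbefore]
  simp only [mul_add, sum_add_distrib, sum_mul_criticalOpinionShift hπ, criticalShortfall]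
  ring

end

theorem pbar_feasible_general
    (n : ℕ)
    (π c xh : Fin n → ℝ) (xstar : ℝ)
    (hπpos : ∀ i, 0 < π i)
    (hcpos : ∀ i, 0 < c i)
    (hxh : ∀ i, 0 ≤ xh i ∧ xh i ≤ 1)
    (hxstar_lt : ∑ i, π i * xh i < xstar)
    (s : Fin n)
    (hs : IsLeast {j : Fin n |
      xstar ≤ ∑ i ∈ Finset.Iic j, π i + ∑ i ∈ Finset.Ioi j, π i * xh i} s)
    (pbar : Fin n → ℝ)
    (hpbar : ∀ j, pbar j =
      if j < s then c j * (1 - xh j)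
      else if j = s then
        (c s / π s) *
          (xstar - ∑ i ∈ Finset.Iio s, π i - ∑ i ∈ Finset.Ici s, π i * xh i)
      else 0) :
    (∀ i, 0 ≤ pbar i) ∧
    (∀ i, xh i + pbar i / c i ≤ 1) ∧
    ∑ i, π i * (xh i + pbar i / c i) = xstar := by
  have hx : ∀ i, xh i ≤ 1 := fun i => (hxh i).2
  have hshift : ∀ i, pbar i / c i = criticalOpinionShift π xh xstar s i := fun i => by
    have := (hcpos i).ne'
    rw [hpbar, criticalOpinionShift, criticalShortfall]
    split_ifs with _ his
    · field_simp
    · subst his; field_simp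
    · simp
  have hshift_nonneg := criticalOpinionShift_nonneg (hπpos s) hx (criticalShortfall_pos hs hxstar_lt)
  refine ⟨fun i => ?_, fun i => ?_, ?_⟩
  · have := mul_nonneg (hcpos i).le (hshift_nonneg i)
    rwa [← hshift, mul_div_cancel₀ _ (hcpos i).ne'] at this
  · linarith [hshift i, criticalOpinionShift_le (hπpos s) hx hs.1 i]
  · simpa only [hshift] using sum_mul_add_criticalOpinionShift (hπpos s).ne'

/-- The payment vector `p̄` defined via the critical item `s` is
feasible for problem (P2): `p̄ i ≥ 0` and `xh i + p̄ i / c i ≤ 1` for all `i`,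
and the influence-weighted opinion after payment equals `x*` exactly
(in particular it is `≥ x*`). -/
theorem pbar_feasible
    (n : ℕ) (hn : 1 ≤ n)
    (π c xh : Fin n → ℝ) (xstar : ℝ)
    (hπpos : ∀ i, 0 < π i) (hπsum : ∑ i, π i = 1)
    (hcpos : ∀ i, 0 < c i)
    (hxh : ∀ i, 0 ≤ xh i ∧ xh i ≤ 1)
    (hxstar_lt : ∑ i, π i * xh i < xstar) (hxstar_le : xstar ≤ 1)
    (hord : ∀ i j : Fin n, i ≤ j → π j / c j ≤ π i / c i)
    (s : Fin n)
    (hs : IsLeast {j : Fin n |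
      xstar ≤ ∑ i ∈ Finset.Iic j, π i + ∑ i ∈ Finset.Ioi j, π i * xh i} s)
    (pbar : Fin n → ℝ)
    (hpbar : ∀ j, pbar j =
      if j < s then c j * (1 - xh j)
      else if j = s then
        (c s / π s) *
          (xstar - ∑ i ∈ Finset.Iio s, π i - ∑ i ∈ Finset.Ici s, π i * xh i)
      else 0) :
    (∀ i, 0 ≤ pbar i) ∧
    (∀ i, xh i + pbar i / c i ≤ 1) ∧
    ∑ i, π i * (xh i + pbar i / c i) = xstar :=
  pbar_feasible_general n π c xh xstar hπpos hcpos hxh hxstar_lt s hs pbar hpbar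
end

section
/- Absorption probabilities sum to one: assume A has self-confidence and let E_1, …, E_m be the ergodic classes of A. For every state i, Σ_{k=1}^m h_i^(k) = 1, where h_i^(k) := lim_{n→∞} Σ_{j∈E_k} (A^n)_{ij} (these limits exist). -/
/-!
No transition leaves an ergodic class, nor the set of all recurrent states: both are closed
sets. The mass that `A ^ ℓ` puts on a closed set is nondecreasing in `ℓ`, hence convergent.
Every state reaches a recurrent state, so for some `N` and `θ < 1`, from every state at most
`θ` of the mass of `A ^ N` lies outside the recurrent states; the mass outside therefore decays
like `θ ^ (ℓ / N)`. As the ergodic classes partition the recurrent states, their limiting masses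
sum to one.
-/

open Finset Filter Topology Matrix

def Consequent {n : ℕ} (A : Matrix (Fin n) (Fin n) ℝ) (i j : Fin n) : Prop :=
  ∃ m : ℕ, 1 ≤ m ∧ 0 < (A ^ m) i j

def Recurrent {n : ℕ} (A : Matrix (Fin n) (Fin n) ℝ) (i : Fin n) : Prop :=
  ∀ j, Consequent A i j → Consequent A j i

lemma tendsto_zero_of_antitone_of_le_pow {f : ℕ → ℝ} (hf : Antitone f) (hf0 : ∀ ℓ, 0 ≤ f ℓ)
    {N : ℕ} {θ : ℝ} (hθ0 : 0 ≤ θ) (hθ1 : θ < 1) (hfθ : ∀ k, f (k * N) ≤ θ ^ k) :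
    Tendsto f atTop (𝓝 0) := by
  have hbdd : BddBelow (Set.range f) := ⟨0, by rintro _ ⟨ℓ, rfl⟩; exact hf0 ℓ⟩
  have hinf : ⨅ ℓ, f ℓ = 0 :=
    le_antisymm
      (ge_of_tendsto' (tendsto_pow_atTop_nhds_zero_of_lt_one hθ0 hθ1)
        fun k => (ciInf_le hbdd _).trans (hfθ k))
      (le_ciInf hf0)
  exact hinf ▸ tendsto_atTop_ciInf hf hbdd

def IsClosedStates {ι : Type*} (A : Matrix ι ι ℝ) (S : Finset ι) : Prop :=
  ∀ i ∈ S, ∀ j ∉ S, A i j = 0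

section Stochastic

variable {ι : Type*} [Fintype ι] {A B C : Matrix ι ι ℝ} {S : Finset ι}

lemma sum_mul_apply (B C : Matrix ι ι ℝ) (S : Finset ι) (i : ι) :
    ∑ j ∈ S, (B * C) i j = ∑ x, B i x * ∑ j ∈ S, C x j := by
  simp only [mul_apply, mul_sum]
  exact sum_comm

variable [DecidableEq ι]

lemma sum_apply_le_one_of_mem_rowStochastic (hB : B ∈ rowStochastic ℝ ι) (S : Finset ι)
    (i : ι) : ∑ j ∈ S, B i j ≤ 1 :=
  sum_row_of_mem_rowStochastic hB i ▸
    sum_le_sum_of_subset_of_nonneg (subset_univ S) fun _ _ _ => nonneg_of_mem_rowStochastic hB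

lemma sum_compl_apply_of_mem_rowStochastic (hB : B ∈ rowStochastic ℝ ι) (S : Finset ι)
    (i : ι) : ∑ j ∈ Sᶜ, B i j = 1 - ∑ j ∈ S, B i j := by
  rw [← sum_row_of_mem_rowStochastic hB i, ← sum_add_sum_compl S, add_sub_cancel_left]

namespace IsClosedStates

lemma mul (hB : IsClosedStates B S) (hC : IsClosedStates C S) : IsClosedStates (B * C) S := by
  intro i hi j hj
  rw [mul_apply]
  refine sum_eq_zero fun x _ => ?_
  by_cases hx : x ∈ S
  · rw [hC x hx j hj, mul_zero]
  · rw [hB i hi x hx, zero_mul]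

lemma pow (hA : IsClosedStates A S) (ℓ : ℕ) : IsClosedStates (A ^ ℓ) S := by
  induction ℓ with
  | zero => exact fun i hi j hj => one_apply_ne (ne_of_mem_of_not_mem hi hj)
  | succ ℓ ih => exact pow_succ A ℓ ▸ ih.mul hA

lemma sum_apply_eq_one (hB : B ∈ rowStochastic ℝ ι) (hS : IsClosedStates B S) {i : ι}
    (hi : i ∈ S) : ∑ j ∈ S, B i j = 1 := by
  rw [← sum_row_of_mem_rowStochastic hB i]
  exact sum_subset (subset_univ S) fun j _ hj => hS i hi j hj

lemma monotone_sum_pow_apply (hA : A ∈ rowStochastic ℝ ι) (hS : IsClosedStates A S) (i : ι) :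
    Monotone fun ℓ => ∑ j ∈ S, (A ^ ℓ) i j := by
  refine monotone_nat_of_le_succ fun ℓ => ?_
  calc ∑ j ∈ S, (A ^ ℓ) i j = ∑ x ∈ S, (A ^ ℓ) i x * ∑ j ∈ S, A x j :=
        sum_congr rfl fun x hx => by rw [hS.sum_apply_eq_one hA hx, mul_one]
    _ ≤ ∑ x, (A ^ ℓ) i x * ∑ j ∈ S, A x j :=
        sum_le_sum_of_subset_of_nonneg (subset_univ S) fun x _ _ =>
          mul_nonneg (nonneg_of_mem_rowStochastic (pow_mem hA ℓ))
            (sum_nonneg fun j _ => nonneg_of_mem_rowStochastic hA)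
    _ = ∑ j ∈ S, (A ^ (ℓ + 1)) i j := by rw [pow_succ, sum_mul_apply]

lemma exists_tendsto_sum_pow_apply (hA : A ∈ rowStochastic ℝ ι) (hS : IsClosedStates A S)
    (i : ι) : ∃ h : ℝ, Tendsto (fun ℓ => ∑ j ∈ S, (A ^ ℓ) i j) atTop (𝓝 h) :=
  ⟨_, tendsto_atTop_ciSup (hS.monotone_sum_pow_apply hA i)
    ⟨1, by rintro _ ⟨ℓ, rfl⟩; exact sum_apply_le_one_of_mem_rowStochastic (pow_mem hA ℓ) S i⟩⟩

lemma exists_forall_sum_pow_apply_pos (hA : A ∈ rowStochastic ℝ ι) (hS : IsClosedStates A S)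
    (hreach : ∀ r, ∃ ℓ, 0 < ∑ j ∈ S, (A ^ ℓ) r j) :
    ∃ N, ∀ r, 0 < ∑ j ∈ S, (A ^ N) r j := by
  choose L hL using hreach
  exact ⟨univ.sup L, fun r =>
    (hL r).trans_le (hS.monotone_sum_pow_apply hA r (le_sup (mem_univ r)))⟩

lemma sum_compl_pow_add_le (hA : A ∈ rowStochastic ℝ ι) (hS : IsClosedStates A S) {N : ℕ}
    {θ : ℝ} (hθ : ∀ x, ∑ j ∈ Sᶜ, (A ^ N) x j ≤ θ) (i : ι) (ℓ : ℕ) :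
    ∑ j ∈ Sᶜ, (A ^ (ℓ + N)) i j ≤ θ * ∑ j ∈ Sᶜ, (A ^ ℓ) i j := by
  have hstay : ∀ x ∈ S, ∑ j ∈ Sᶜ, (A ^ N) x j = 0 := fun x hx =>
    sum_eq_zero fun j hj => hS.pow N x hx j (mem_compl.1 hj)
  rw [pow_add, sum_mul_apply, mul_sum,
    ← sum_subset (subset_univ Sᶜ) fun x _ hx => by rw [hstay x (by simpa using hx), mul_zero]]
  exact sum_le_sum fun x _ => by
    rw [mul_comm θ]
    exact mul_le_mul_of_nonneg_left (hθ x) (nonneg_of_mem_rowStochastic (pow_mem hA ℓ))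

lemma tendsto_sum_pow_apply_one (hA : A ∈ rowStochastic ℝ ι) (hS : IsClosedStates A S)
    (hreach : ∀ r, ∃ ℓ, 0 < ∑ j ∈ S, (A ^ ℓ) r j) (i : ι) :
    Tendsto (fun ℓ => ∑ j ∈ S, (A ^ ℓ) i j) atTop (𝓝 1) := by
  have hout ℓ r : ∑ j ∈ Sᶜ, (A ^ ℓ) r j = 1 - ∑ j ∈ S, (A ^ ℓ) r j :=
    sum_compl_apply_of_mem_rowStochastic (pow_mem hA ℓ) S r
  obtain ⟨N, hN⟩ := hS.exists_forall_sum_pow_apply_pos hA hreach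
  have : Nonempty ι := ⟨i⟩
  obtain ⟨r₀, hr₀⟩ := Finite.exists_max fun r => ∑ j ∈ Sᶜ, (A ^ N) r j
  set θ := ∑ j ∈ Sᶜ, (A ^ N) r₀ j
  have hgeom (k : ℕ) : ∑ j ∈ Sᶜ, (A ^ (k * N)) i j ≤ θ ^ k := by
    induction k with
    | zero => simpa using sum_apply_le_one_of_mem_rowStochastic (pow_mem hA 0) Sᶜ i
    | succ k ih =>
      rw [Nat.succ_mul, pow_succ, mul_comm _ θ]
      exact (hS.sum_compl_pow_add_le hA hr₀ i (k * N)).trans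
        (mul_le_mul_of_nonneg_left ih (sum_nonneg fun j _ =>
          nonneg_of_mem_rowStochastic (pow_mem hA N)))
  have hdecay := tendsto_zero_of_antitone_of_le_pow (f := fun ℓ => ∑ j ∈ Sᶜ, (A ^ ℓ) i j)
    (fun a b hab => by simp only [hout]; linarith [hS.monotone_sum_pow_apply hA i hab])
    (fun ℓ => sum_nonneg fun j _ => nonneg_of_mem_rowStochastic (pow_mem hA ℓ))
    (sum_nonneg fun j _ => nonneg_of_mem_rowStochastic (pow_mem hA N))
    (by rw [hout]; linarith [hN r₀]) hgeom
  simpa [hout] using hdecay.const_sub 1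

end IsClosedStates

end Stochastic

section Consequent

variable {n : ℕ} {A : Matrix (Fin n) (Fin n) ℝ} {i j k : Fin n}

lemma consequent_of_pos (h : 0 < A i j) : Consequent A i j :=
  ⟨1, le_rfl, by rwa [pow_one]⟩

lemma Consequent.trans (hA : A ∈ rowStochastic ℝ (Fin n)) (hij : Consequent A i j)
    (hjk : Consequent A j k) : Consequent A i k := by
  obtain ⟨a, ha, hij⟩ := hij
  obtain ⟨b, hb, hjk⟩ := hjk
  refine ⟨a + b, by omega, ?_⟩
  rw [pow_add, mul_apply]
  exact (mul_pos hij hjk).trans_le <| single_le_sum (f := fun x => (A ^ a) i x * (A ^ b) x k)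
    (fun x _ => mul_nonneg
    (nonneg_of_mem_rowStochastic (pow_mem hA a)) (nonneg_of_mem_rowStochastic (pow_mem hA b)))
    (mem_univ j)

lemma Recurrent.of_consequent (hA : A ∈ rowStochastic ℝ (Fin n)) (hi : Recurrent A i)
    (hij : Consequent A i j) : Recurrent A j :=
  fun k hjk => (hi k (hij.trans hA hjk)).trans hA hij

open Classical in
noncomputable def consequents (A : Matrix (Fin n) (Fin n) ℝ) (i : Fin n) : Finset (Fin n) :=
  univ.filter (Consequent A i)

lemma mem_consequents : j ∈ consequents A i ↔ Consequent A i j := by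
  simp [consequents]

lemma consequents_subset (hA : A ∈ rowStochastic ℝ (Fin n)) (hij : Consequent A i j) :
    consequents A j ⊆ consequents A i :=
  fun _ hk => mem_consequents.2 (hij.trans hA (mem_consequents.1 hk))

lemma consequents_nonempty (hA : A ∈ rowStochastic ℝ (Fin n)) (i : Fin n) :
    (consequents A i).Nonempty := by
  obtain ⟨j, -, hj⟩ := exists_lt_of_sum_lt (s := univ) (f := fun _ => (0 : ℝ)) (g := A i)
    (by simp [sum_row_of_mem_rowStochastic hA i])
  exact ⟨j, mem_consequents.2 (consequent_of_pos hj)⟩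

/-- A consequent `j` of `i` with the fewest consequents shares them with all its own
consequents, so any consequent of `j` is recurrent. -/
lemma exists_recurrent_consequent (hA : A ∈ rowStochastic ℝ (Fin n)) (i : Fin n) :
    ∃ r, Recurrent A r ∧ Consequent A i r := by
  obtain ⟨j, hij, hmin⟩ := (consequents A i).exists_min_image (fun j => #(consequents A j))
    (consequents_nonempty hA i)
  rw [mem_consequents] at hij
  have hstable k (hjk : Consequent A j k) : consequents A k = consequents A j :=
    eq_of_subset_of_card_le (consequents_subset hA hjk)
      (hmin k (mem_consequents.2 (hij.trans hA hjk)))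
  obtain ⟨k, hjk⟩ := consequents_nonempty hA j
  rw [mem_consequents] at hjk
  refine ⟨k, fun l hkl => ?_, hij.trans hA hjk⟩
  rw [← mem_consequents, hstable l (hjk.trans hA hkl)]
  exact mem_consequents.2 hjk

open Classical in
noncomputable def ergodicClass (A : Matrix (Fin n) (Fin n) ℝ) (i : Fin n) : Finset (Fin n) :=
  univ.filter fun j => Consequent A i j ∧ Consequent A j i

lemma mem_ergodicClass : j ∈ ergodicClass A i ↔ Consequent A i j ∧ Consequent A j i := by
  simp [ergodicClass]

lemma ergodicClass_eq_of_mem (hA : A ∈ rowStochastic ℝ (Fin n)) (hj : j ∈ ergodicClass A i) :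
    ergodicClass A j = ergodicClass A i := by
  obtain ⟨hij, hji⟩ := mem_ergodicClass.1 hj
  ext k
  simp only [mem_ergodicClass]
  exact ⟨fun ⟨hjk, hkj⟩ => ⟨hij.trans hA hjk, hkj.trans hA hji⟩,
    fun ⟨hik, hki⟩ => ⟨hji.trans hA hik, hki.trans hA hij⟩⟩

lemma disjoint_ergodicClass (hA : A ∈ rowStochastic ℝ (Fin n))
    (hne : ergodicClass A i ≠ ergodicClass A j) : Disjoint (ergodicClass A i) (ergodicClass A j) :=
  disjoint_left.2 fun _ hki hkj =>
    hne ((ergodicClass_eq_of_mem hA hki).symm.trans (ergodicClass_eq_of_mem hA hkj))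

lemma Recurrent.of_mem_ergodicClass (hA : A ∈ rowStochastic ℝ (Fin n)) (hi : Recurrent A i)
    (hj : j ∈ ergodicClass A i) : Recurrent A j :=
  hi.of_consequent hA (mem_ergodicClass.1 hj).1

lemma Recurrent.isClosedStates_ergodicClass (hA : A ∈ rowStochastic ℝ (Fin n))
    (hi : Recurrent A i) : IsClosedStates A (ergodicClass A i) := by
  intro r hr j hj
  by_contra hne
  have hrj := consequent_of_pos ((nonneg_of_mem_rowStochastic hA).lt_of_ne' hne)
  obtain ⟨hir, hri⟩ := mem_ergodicClass.1 hr
  exact hj (mem_ergodicClass.2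
    ⟨hir.trans hA hrj, ((hi.of_mem_ergodicClass hA hr) j hrj).trans hA hri⟩)

open Classical in
noncomputable def recurrentStates (A : Matrix (Fin n) (Fin n) ℝ) : Finset (Fin n) :=
  univ.filter (Recurrent A)

lemma mem_recurrentStates : i ∈ recurrentStates A ↔ Recurrent A i := by
  simp [recurrentStates]

lemma isClosedStates_recurrentStates (hA : A ∈ rowStochastic ℝ (Fin n)) :
    IsClosedStates A (recurrentStates A) := by
  intro r hr j hj
  by_contra hne
  exact hj (mem_recurrentStates.2 ((mem_recurrentStates.1 hr).of_consequent hA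
    (consequent_of_pos ((nonneg_of_mem_rowStochastic hA).lt_of_ne' hne))))

lemma exists_sum_pow_apply_recurrentStates_pos (hA : A ∈ rowStochastic ℝ (Fin n))
    (i : Fin n) : ∃ ℓ, 0 < ∑ j ∈ recurrentStates A, (A ^ ℓ) i j := by
  obtain ⟨r, hr, ℓ, -, hℓ⟩ := exists_recurrent_consequent hA i
  exact ⟨ℓ, hℓ.trans_le (single_le_sum (f := fun j => (A ^ ℓ) i j)
    (fun j _ => nonneg_of_mem_rowStochastic (pow_mem hA ℓ)) (mem_recurrentStates.2 hr))⟩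

end Consequent

theorem absorption_probabilities_sum_to_one_general
    (n : ℕ)
    (A : Matrix (Fin n) (Fin n) ℝ)
    (hA_nonneg : ∀ i j, 0 ≤ A i j)
    (hA_rows : ∀ i, ∑ j, A i j = 1)
    (m : ℕ) (E : Fin m → Finset (Fin n))
    (hE_class : ∀ k, ∃ i, Recurrent A i ∧
      ∀ j, j ∈ E k ↔ (Consequent A i j ∧ Consequent A j i))
    (hE_cover : ∀ i, Recurrent A i → ∃ k, i ∈ E k)
    (hE_inj : Function.Injective E) :
    ∀ i : Fin n, ∃ h : Fin m → ℝ,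
      (∀ k, Tendsto (fun ℓ : ℕ => ∑ j ∈ E k, (A ^ ℓ) i j) atTop (𝓝 (h k))) ∧
      ∑ k, h k = 1 := by
  have hA : A ∈ rowStochastic ℝ (Fin n) := mem_rowStochastic_iff_sum.2 ⟨hA_nonneg, hA_rows⟩
  have hE k : ∃ r, Recurrent A r ∧ E k = ergodicClass A r := by
    obtain ⟨r, hr, hmem⟩ := hE_class k
    exact ⟨r, hr, ext fun j => (hmem j).trans mem_ergodicClass.symm⟩
  have hdisj : ((univ : Finset (Fin m)) : Set (Fin m)).PairwiseDisjoint E := by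
    intro k _ k' _ hkk'
    have hne := hE_inj.ne hkk'
    obtain ⟨r, -, hr⟩ := hE k
    obtain ⟨r', -, hr'⟩ := hE k'
    rw [hr, hr'] at hne
    simpa only [Function.onFun, hr, hr'] using disjoint_ergodicClass hA hne
  have hunion : univ.biUnion E = recurrentStates A := by
    ext j
    simp only [mem_biUnion, mem_univ, true_and, mem_recurrentStates]
    refine ⟨fun ⟨k, hj⟩ => ?_, hE_cover j⟩
    obtain ⟨r, hr, hEk⟩ := hE k
    exact hr.of_mem_ergodicClass hA (hEk ▸ hj)
  have hclosed k : IsClosedStates A (E k) := by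
    obtain ⟨r, hr, hEk⟩ := hE k
    exact hEk ▸ hr.isClosedStates_ergodicClass hA
  intro i
  choose h hh using fun k => (hclosed k).exists_tendsto_sum_pow_apply hA i
  refine ⟨h, hh, tendsto_nhds_unique (tendsto_finsetSum univ fun k _ => hh k) ?_⟩
  simp_rw [← sum_biUnion hdisj, hunion]
  exact (isClosedStates_recurrentStates hA).tendsto_sum_pow_apply_one hA
    (exists_sum_pow_apply_recurrentStates_pos hA) i

/-- Absorption probabilities sum to one: for a row-stochastic
matrix `A` with self-confidence, whose ergodic classes are `E 1, …, E m`, for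
every state `i` the limits `h k = lim_ℓ ∑_{j ∈ E k} (A^ℓ) i j` exist and
`∑ k, h k = 1`. -/
theorem absorption_probabilities_sum_to_one
    (n : ℕ) (hn : 1 ≤ n)
    (A : Matrix (Fin n) (Fin n) ℝ)
    (hA_nonneg : ∀ i j, 0 ≤ A i j)
    (hA_rows : ∀ i, ∑ j, A i j = 1)
    (hself : ∀ i, 0 < A i i)
    (m : ℕ) (E : Fin m → Finset (Fin n))
    (hE_class : ∀ k, ∃ i, Recurrent A i ∧
      ∀ j, j ∈ E k ↔ (Consequent A i j ∧ Consequent A j i))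
    (hE_cover : ∀ i, Recurrent A i → ∃ k, i ∈ E k)
    (hE_inj : Function.Injective E) :
    ∀ i : Fin n, ∃ h : Fin m → ℝ,
      (∀ k, Tendsto (fun ℓ : ℕ => ∑ j ∈ E k, (A ^ ℓ) i j) atTop (𝓝 (h k))) ∧
      ∑ k, h k = 1 :=
  absorption_probabilities_sum_to_one_general n A hA_nonneg hA_rows m E hE_class hE_cover hE_inj
end
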